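/- (Theorem on Infinitary Definitions) Let F be an infinitary propositional formula over σ, let Q ⊆ σ be a set of atoms none of which occurs in F, and let G be a definition for Q. Then the map I ↦ I \ Q is a one-to-one correspondence between the stable models of F ∧ G and the stable models of F. -/

import Mathlib

/-- Infinitary propositional formulas over signature `σ`:
atoms, conjunctions and disjunctions of (index-)sets of formulas, implication. -/
inductive Formula (σ : Type) : Type 1
  | atom : σ → Formula σ
  | conj : (ι : Type) → (ι → Formula σ) → Formula σ
  | disj : (ι : Type) → (ι → Formula σ) → Formula σ
  | imp : Formula σ → Formula σ → Formula σ

namespace Formula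

variable {σ : Type}

/-- `⊥` is the empty disjunction. -/
def bot : Formula σ := Formula.disj Empty (fun e => e.elim)

/-- Binary conjunction `F ∧ G`. -/
def and (F G : Formula σ) : Formula σ := Formula.conj Bool (fun b => if b then F else G)

/-- Binary disjunction `F ∨ G`. -/
def or (F G : Formula σ) : Formula σ := Formula.disj Bool (fun b => if b then F else G)

/-- Negation `¬F` abbreviates `F → ⊥`. -/
def neg (F : Formula σ) : Formula σ := Formula.imp F bot

/-- Conjunction of a set of atoms. -/
def conjAtoms (S : Set σ) : Formula σ := Formula.conj S (fun p => Formula.atom p.val)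

/-- Satisfaction of an infinitary formula by an interpretation `I ⊆ σ`. -/
def Sat (I : Set σ) : Formula σ → Prop
  | .atom p => p ∈ I
  | .conj _ f => ∀ i, Sat I (f i)
  | .disj _ f => ∃ i, Sat I (f i)
  | .imp F G => Sat I F → Sat I G

open Classical in
/-- The reduct `F^I`. -/
noncomputable def reduct (I : Set σ) : Formula σ → Formula σ
  | .atom p => if p ∈ I then Formula.atom p else bot
  | .conj ι f => Formula.conj ι (fun i => reduct I (f i))
  | .disj ι f => Formula.disj ι (fun i => reduct I (f i))
  | .imp F G => if Sat I (Formula.imp F G) then Formula.imp (reduct I F) (reduct I G) else bot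

/-- `I` is an `A`-stable model of `F`: `I` is minimal w.r.t. `≤_A`
(`J ≤_A I` iff `J ⊆ I` and `I \ J ⊆ A`) among interpretations satisfying `F^I`. -/
def AStable (A : Set σ) (I : Set σ) (F : Formula σ) : Prop :=
  Sat I (reduct I F) ∧ ∀ J : Set σ, J ⊆ I → I \ J ⊆ A → Sat J (reduct I F) → J = I

/-- A stable model is a `σ`-stable model. -/
def Stable (I : Set σ) (F : Formula σ) : Prop := AStable Set.univ I F

/-- The strictly positive atoms `P(F)`. -/
def spos : Formula σ → Set σ
  | .atom p => {p}
  | .conj _ f => ⋃ i, spos (f i)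
  | .disj _ f => ⋃ i, spos (f i)
  | .imp _ H => spos H

/-- `F` is (syntactically) the formula `⊥`, i.e. an empty disjunction. -/
def IsBot : Formula σ → Prop
  | .disj ι _ => IsEmpty ι
  | _ => False

open Classical in
mutual
/-- Positive nonnegated atoms `Pnn(F)`. -/
noncomputable def pnn : Formula σ → Set σ
  | .atom p => {p}
  | .conj _ f => ⋃ i, pnn (f i)
  | .disj _ f => ⋃ i, pnn (f i)
  | .imp G H => if IsBot H then ∅ else nnn G ∪ pnn H

/-- Negative nonnegated atoms `Nnn(F)`. -/
noncomputable def nnn : Formula σ → Set σ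
  | .atom _ => ∅
  | .conj _ f => ⋃ i, nnn (f i)
  | .disj _ f => ⋃ i, nnn (f i)
  | .imp G H => if IsBot H then ∅ else pnn G ∪ nnn H
end

/-- The rules of a formula, as antecedent/consequent pairs. -/
def rules : Formula σ → Set (Formula σ × Formula σ)
  | .atom _ => ∅
  | .conj _ f => ⋃ i, rules (f i)
  | .disj _ f => ⋃ i, rules (f i)
  | .imp G H => insert (G, H) (rules H)

/-- Edge relation of the positive dependency graph `DG_A[F]` (vertex set `A`). -/
noncomputable def DGEdge (F : Formula σ) (A : Set σ) (p q : σ) : Prop :=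
  p ∈ A ∧ q ∈ A ∧ ∃ R ∈ rules F, p ∈ spos R.2 ∧ q ∈ pnn R.1

/-- The atoms occurring in a formula. -/
def atoms : Formula σ → Set σ
  | .atom p => {p}
  | .conj _ f => ⋃ i, atoms (f i)
  | .disj _ f => ⋃ i, atoms (f i)
  | .imp G H => atoms G ∪ atoms H

/-- `G` is a definition for the set `Q` of atoms: a conjunction of formulas
`H ∧ C^∧ → q` with `q ∈ Q`, `C ⊆ Q`, and no atom of `Q` occurring in `H`. -/
def IsDefinition (Q : Set σ) (G : Formula σ) : Prop :=
  ∃ (ι : Type) (g : ι → Formula σ), G = Formula.conj ι g ∧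
    ∀ i, ∃ (H : Formula σ) (C : Set σ) (q : σ),
      q ∈ Q ∧ C ⊆ Q ∧ (∀ p ∈ Q, p ∉ atoms H) ∧
      g i = Formula.imp (Formula.and H (conjAtoms C)) (Formula.atom q)

end Formula

section Graph

variable {V : Type*}

/-- An infinite walk in the directed graph with edge relation `E`. -/
def IsInfWalk (E : V → V → Prop) (w : ℕ → V) : Prop := ∀ i, E (w i) (w (i + 1))

/-- The partition `{P₁, P₂}` is infinitely separable: every infinite walk
visits `P₁` or `P₂` only finitely often. -/
def InfSeparable (E : V → V → Prop) (P1 P2 : Set V) : Prop :=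
  ∀ w : ℕ → V, IsInfWalk E w → {i | w i ∈ P1}.Finite ∨ {i | w i ∈ P2}.Finite

/-- `u` and `v` are in the same strongly connected component:
each is reachable from the other. -/
def SameSCC (E : V → V → Prop) (u v : V) : Prop :=
  Relation.ReflTransGen E u v ∧ Relation.ReflTransGen E v u

/-- The partition `{P₁, P₂}` is separable: every strongly connected
component is contained in `P₁` or in `P₂`. -/
def Separable (E : V → V → Prop) (P1 P2 : Set V) : Prop :=
  ∀ u v, SameSCC E u v → ((u ∈ P1 ∧ v ∈ P1) ∨ (u ∈ P2 ∧ v ∈ P2))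

end Graph

/-!
Fix the atoms outside `Q`, say `J`. The rules `H ∧ C^∧ → q` of a definition for `Q` then form a
monotone operator on sets of atoms (a rule fires when `J ⊨ H` and `C` is already derived), and its
least fixpoint `D(J)` is forced: if `I ⊨ G`, every `K ⊆ I` with `K \ Q = I \ Q` satisfying `G^I`
is closed under the operator for `J = I \ Q`, hence contains `D(J)`, while every `K ⊆ I` with
`K ∩ Q = D(J)` satisfies `G^I`. As neither `F` nor `F^I` sees `Q`, the stable models of `F ∧ G`
are exactly the sets `J ∪ D(J)` with `J` a stable model of `F`.
-/

theorem Set.union_sdiff_of_disjoint_of_subset {α : Type*} {s t u : Set α} (hs : Disjoint s u)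
    (ht : t ⊆ u) :
    (s ∪ t) \ u = s := by
  rw [Set.union_sdiff_distrib, hs.sdiff_eq_left, Set.sdiff_eq_empty.mpr ht, Set.union_empty]

theorem Set.union_inter_of_disjoint_of_subset {α : Type*} {s t u : Set α} (hs : Disjoint s u)
    (ht : t ⊆ u) :
    (s ∪ t) ∩ u = t := by
  rw [Set.union_inter_distrib_right, hs.inter_eq, Set.empty_union, Set.inter_eq_left.mpr ht]

namespace Formula

variable {σ : Type}

theorem not_sat_bot {I : Set σ} : ¬ Sat I (bot (σ := σ)) :=
  fun ⟨e, _⟩ => e.elim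

@[simp]
theorem atoms_bot : atoms (bot (σ := σ)) = ∅ :=
  Set.iUnion_of_empty _

theorem sat_congr {I I' : Set σ} {F : Formula σ} (h : ∀ p ∈ atoms F, p ∈ I ↔ p ∈ I') :
    Sat I F ↔ Sat I' F := by
  induction F with
  | atom p => exact h p rfl
  | conj ι f ih => exact forall_congr' fun i => ih i fun p hp => h p (Set.mem_iUnion_of_mem i hp)
  | disj ι f ih => exact exists_congr fun i => ih i fun p hp => h p (Set.mem_iUnion_of_mem i hp)
  | imp A B ihA ihB =>
      exact imp_congr (ihA fun p hp => h p (Or.inl hp)) (ihB fun p hp => h p (Or.inr hp))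

theorem reduct_congr {I I' : Set σ} {F : Formula σ} (h : ∀ p ∈ atoms F, p ∈ I ↔ p ∈ I') :
    reduct I F = reduct I' F := by
  classical
  induction F with
  | atom p => exact if_congr (h p rfl) rfl rfl
  | conj ι f ih =>
      simp only [reduct, funext fun i => ih i fun p hp => h p (Set.mem_iUnion_of_mem i hp)]
  | disj ι f ih =>
      simp only [reduct, funext fun i => ih i fun p hp => h p (Set.mem_iUnion_of_mem i hp)]
  | imp A B ihA ihB =>
      simp only [reduct, ihA fun p hp => h p (Or.inl hp), ihB fun p hp => h p (Or.inr hp)]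
      exact if_congr (sat_congr h) rfl rfl

theorem atoms_reduct_subset (I : Set σ) (F : Formula σ) : atoms (reduct I F) ⊆ atoms F := by
  induction F with
  | atom p => by_cases hp : p ∈ I <;> simp [reduct, hp]
  | conj ι f ih => exact Set.iUnion_mono ih
  | disj ι f ih => exact Set.iUnion_mono ih
  | imp A B ihA ihB =>
      by_cases h : Sat I (imp A B)
      · rw [reduct, if_pos h]
        exact Set.union_subset_union ihA ihB
      · simp [reduct, if_neg h]

theorem sat_of_sat_reduct {I K : Set σ} {F : Formula σ} (h : Sat K (reduct I F)) : Sat I F := by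
  induction F with
  | atom p =>
      by_contra hp
      rw [reduct, if_neg (show p ∉ I from hp)] at h
      exact not_sat_bot h
  | conj ι f ih => exact fun i => ih i (h i)
  | disj ι f ih => exact h.imp fun i => ih i
  | imp A B ihA ihB =>
      by_contra hAB
      simp only [reduct, if_neg hAB] at h
      exact not_sat_bot h

theorem sat_reduct_self {I : Set σ} {F : Formula σ} : Sat I (reduct I F) ↔ Sat I F := by
  refine ⟨sat_of_sat_reduct, fun h => ?_⟩
  induction F with
  | atom p => simpa only [reduct, if_pos (show p ∈ I from h)]
  | conj ι f ih => exact fun i => ih i (h i)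
  | disj ι f ih => exact h.imp fun i => ih i
  | imp A B ihA ihB =>
      simp only [reduct, if_pos h]
      exact fun hA => ihB (h (sat_of_sat_reduct hA))

section Disjoint

variable {Q : Set σ} {F : Formula σ}

theorem mem_diff_iff_of_disjoint (hQ : Disjoint Q (atoms F)) {I : Set σ} :
    ∀ p ∈ atoms F, p ∈ I \ Q ↔ p ∈ I :=
  fun _ hp => and_iff_left (Set.disjoint_right.mp hQ hp)

theorem sat_diff_of_disjoint (hQ : Disjoint Q (atoms F)) {I : Set σ} :
    Sat (I \ Q) F ↔ Sat I F :=
  sat_congr (mem_diff_iff_of_disjoint hQ)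

theorem reduct_diff_of_disjoint (hQ : Disjoint Q (atoms F)) {I : Set σ} :
    reduct (I \ Q) F = reduct I F :=
  reduct_congr (mem_diff_iff_of_disjoint hQ)

theorem sat_reduct_diff_of_disjoint (hQ : Disjoint Q (atoms F)) {I K : Set σ} :
    Sat (K \ Q) (reduct (I \ Q) F) ↔ Sat K (reduct I F) := by
  rw [reduct_diff_of_disjoint hQ]
  exact sat_diff_of_disjoint (hQ.mono_right (atoms_reduct_subset I F))

theorem sat_reduct_of_diff_eq (hQ : Disjoint Q (atoms F)) {I K : Set σ} (hKI : K \ Q = I \ Q) :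
    Sat K (reduct I F) ↔ Sat I F := by
  rw [← sat_reduct_diff_of_disjoint hQ, hKI, sat_reduct_self, sat_diff_of_disjoint hQ]

theorem Stable.disjoint (hQ : Disjoint Q (atoms F)) {J : Set σ} (hJ : Stable J F) :
    Disjoint J Q := by
  refine (sdiff_eq_self_iff_disjoint.mp
    (hJ.2 (J \ Q) Set.sdiff_subset (Set.subset_univ _) ?_)).symm
  rw [← reduct_diff_of_disjoint hQ, sat_reduct_diff_of_disjoint hQ]
  exact hJ.1

end Disjoint

theorem sat_and {I : Set σ} {A B : Formula σ} : Sat I (and A B) ↔ Sat I A ∧ Sat I B :=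
  ⟨fun h => ⟨h true, h false⟩, fun ⟨hA, hB⟩ b => by cases b <;> assumption⟩

theorem reduct_and {I : Set σ} {A B : Formula σ} :
    reduct I (and A B) = and (reduct I A) (reduct I B) := by
  simp only [and, reduct, apply_ite]

theorem sat_conjAtoms {I S : Set σ} : Sat I (conjAtoms S) ↔ S ⊆ I :=
  ⟨fun h p hp => h ⟨p, hp⟩, fun h p => h p.2⟩

theorem sat_reduct_atom {I K : Set σ} {p : σ} : Sat K (reduct I (atom p)) ↔ p ∈ I ∧ p ∈ K := by
  by_cases hp : p ∈ I
  · rw [reduct, if_pos hp]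
    exact (and_iff_right hp).symm
  · rw [reduct, if_neg hp]
    exact iff_of_false not_sat_bot fun h => hp h.1

theorem sat_reduct_conjAtoms {I K S : Set σ} : Sat K (reduct I (conjAtoms S)) ↔ S ⊆ I ∩ K :=
  ⟨fun h p hp => sat_reduct_atom.mp (h ⟨p, hp⟩), fun h p => sat_reduct_atom.mpr (h p.2)⟩

theorem reduct_imp_of_sat {I : Set σ} {A B : Formula σ} (h : Sat I (imp A B)) :
    reduct I (imp A B) = imp (reduct I A) (reduct I B) := by
  rw [reduct, if_pos h]

section Definition

variable {ι : Type} (H : ι → Formula σ) (C : ι → Set σ) (q : ι → σ)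

def defFormula : Formula σ :=
  conj ι fun i => imp (and (H i) (conjAtoms (C i))) (atom (q i))

def defStep (J : Set σ) : Set σ →o Set σ where
  toFun S := {x | ∃ i, x = q i ∧ Sat J (H i) ∧ C i ⊆ S}
  monotone' _ _ hSS' := fun _ ⟨i, hx, hH, hC⟩ => ⟨i, hx, hH, hC.trans hSS'⟩

theorem lfp_defStep_subset {Q : Set σ} (hq : ∀ i, q i ∈ Q) (J : Set σ) :
    (defStep H C q J).lfp ⊆ Q :=
  OrderHom.lfp_le _ fun _ ⟨i, hx, _⟩ => hx ▸ hq i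

variable {H C q}

theorem IsDefinition.exists_eq_defFormula {Q : Set σ} {G : Formula σ} (hG : IsDefinition Q G) :
    ∃ (ι : Type) (H : ι → Formula σ) (C : ι → Set σ) (q : ι → σ), G = defFormula H C q ∧
      (∀ i, q i ∈ Q) ∧ (∀ i, C i ⊆ Q) ∧ ∀ i, Disjoint Q (atoms (H i)) := by
  obtain ⟨ι, g, rfl, hg⟩ := hG
  choose H C q hq hC hH hg using hg
  exact ⟨ι, H, C, q, by rw [defFormula, ← funext hg], hq, hC,
    fun i => Set.disjoint_left.mpr (hH i)⟩

theorem sat_defFormula {I : Set σ} :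
    Sat I (defFormula H C q) ↔ ∀ i, Sat I (H i) → C i ⊆ I → q i ∈ I :=
  forall_congr' fun _ => by rw [Sat, sat_and, sat_conjAtoms, and_imp]; rfl

theorem sat_reduct_defFormula {I K : Set σ} (hI : Sat I (defFormula H C q)) (hKI : K ⊆ I) :
    Sat K (reduct I (defFormula H C q)) ↔ ∀ i, Sat K (reduct I (H i)) → C i ⊆ K → q i ∈ K := by
  refine forall_congr' fun i => ?_
  change Sat K (reduct I (imp _ _)) ↔ _
  rw [reduct_imp_of_sat (hI i), Sat, reduct_and, sat_and, sat_reduct_conjAtoms,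
    sat_reduct_atom, Set.inter_eq_right.mpr hKI, and_imp]
  exact forall₂_congr fun _ hC => ⟨And.right, fun hq => ⟨hKI hq, hq⟩⟩

variable {Q : Set σ}

theorem sat_defFormula_of_inter_eq_lfp (hH : ∀ i, Disjoint Q (atoms (H i)))
    (hC : ∀ i, C i ⊆ Q) {I : Set σ} (hI : I ∩ Q = (defStep H C q (I \ Q)).lfp) :
    Sat I (defFormula H C q) := by
  refine sat_defFormula.mpr fun i hHi hCi => (Set.inter_subset_left : I ∩ Q ⊆ I) ?_
  rw [hI, ← OrderHom.map_lfp]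
  exact ⟨i, rfl, (sat_diff_of_disjoint (hH i)).mpr hHi, hI ▸ Set.subset_inter hCi (hC i)⟩

theorem sat_reduct_defFormula_of_inter_eq_lfp (hH : ∀ i, Disjoint Q (atoms (H i)))
    (hC : ∀ i, C i ⊆ Q) {I K : Set σ} (hI : Sat I (defFormula H C q)) (hKI : K ⊆ I)
    (hK : K ∩ Q = (defStep H C q (I \ Q)).lfp) :
    Sat K (reduct I (defFormula H C q)) := by
  refine (sat_reduct_defFormula hI hKI).mpr fun i hHi hCi =>
    (Set.inter_subset_left : K ∩ Q ⊆ K) ?_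
  rw [hK, ← OrderHom.map_lfp]
  exact ⟨i, rfl, (sat_diff_of_disjoint (hH i)).mpr (sat_of_sat_reduct hHi),
    hK ▸ Set.subset_inter hCi (hC i)⟩

theorem lfp_subset_of_sat_reduct_defFormula (hH : ∀ i, Disjoint Q (atoms (H i))) {I K : Set σ}
    (hI : Sat I (defFormula H C q)) (hKI : K ⊆ I) (hKQ : K \ Q = I \ Q)
    (hK : Sat K (reduct I (defFormula H C q))) :
    (defStep H C q (I \ Q)).lfp ⊆ K := by
  refine OrderHom.lfp_le _ fun _ ⟨i, hx, hHi, hCi⟩ => hx ▸ ?_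
  refine (sat_reduct_defFormula hI hKI).mp hK i ?_ hCi
  rw [sat_reduct_of_diff_eq (hH i) hKQ, ← sat_diff_of_disjoint (hH i)]
  exact hHi

theorem lfp_subset_of_sat_defFormula (hH : ∀ i, Disjoint Q (atoms (H i))) {I : Set σ}
    (hI : Sat I (defFormula H C q)) : (defStep H C q (I \ Q)).lfp ⊆ I :=
  lfp_subset_of_sat_reduct_defFormula hH hI subset_rfl rfl (sat_reduct_self.mpr hI)

end Definition

section Stable

variable {ι : Type} {H : ι → Formula σ} {C : ι → Set σ} {q : ι → σ} {F : Formula σ} {Q : Set σ}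

theorem Stable.eq_union_lfp_of_and_defFormula (hF : Disjoint Q (atoms F)) (hq : ∀ i, q i ∈ Q)
    (hC : ∀ i, C i ⊆ Q) (hH : ∀ i, Disjoint Q (atoms (H i))) {I : Set σ}
    (hI : Stable I (and F (defFormula H C q))) :
    I = I \ Q ∪ (defStep H C q (I \ Q)).lfp := by
  obtain ⟨hIF, hIG⟩ := sat_and.mp (sat_reduct_self.mp hI.1)
  have hDI := lfp_subset_of_sat_defFormula hH hIG
  have hDQ := lfp_defStep_subset H C q hq (I \ Q)
  have hKI : I \ Q ∪ (defStep H C q (I \ Q)).lfp ⊆ I := Set.union_subset Set.sdiff_subset hDI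
  refine (hI.2 _ hKI (Set.subset_univ _) ?_).symm
  rw [reduct_and, sat_and]
  exact ⟨(sat_reduct_of_diff_eq hF
      (Set.union_sdiff_of_disjoint_of_subset Set.disjoint_sdiff_left hDQ)).mpr hIF,
    sat_reduct_defFormula_of_inter_eq_lfp hH hC hIG hKI
      (Set.union_inter_of_disjoint_of_subset Set.disjoint_sdiff_left hDQ)⟩

theorem Stable.diff_of_and_defFormula (hF : Disjoint Q (atoms F)) (hq : ∀ i, q i ∈ Q)
    (hC : ∀ i, C i ⊆ Q) (hH : ∀ i, Disjoint Q (atoms (H i))) {I : Set σ}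
    (hI : Stable I (and F (defFormula H C q))) : Stable (I \ Q) F := by
  obtain ⟨hIF, hIG⟩ := sat_and.mp (sat_reduct_self.mp hI.1)
  have hDI := lfp_subset_of_sat_defFormula hH hIG
  have hDQ := lfp_defStep_subset H C q hq (I \ Q)
  refine ⟨(sat_reduct_diff_of_disjoint hF).mpr (sat_reduct_self.mpr hIF), fun K hKJ _ hK => ?_⟩
  have hKQ : Disjoint K Q := Set.disjoint_sdiff_left.mono_left hKJ
  have hKI : K ∪ (defStep H C q (I \ Q)).lfp ⊆ I :=
    Set.union_subset (hKJ.trans Set.sdiff_subset) hDI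
  have hKD : K ∪ (defStep H C q (I \ Q)).lfp = I := by
    refine hI.2 _ hKI (Set.subset_univ _) ?_
    rw [reduct_and, sat_and, ← sat_reduct_diff_of_disjoint hF,
      Set.union_sdiff_of_disjoint_of_subset hKQ hDQ]
    exact ⟨hK, sat_reduct_defFormula_of_inter_eq_lfp hH hC hIG hKI
      (Set.union_inter_of_disjoint_of_subset hKQ hDQ)⟩
  rw [← Set.union_sdiff_of_disjoint_of_subset hKQ hDQ, hKD]

theorem Stable.union_lfp_and_defFormula (hF : Disjoint Q (atoms F)) (hq : ∀ i, q i ∈ Q)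
    (hC : ∀ i, C i ⊆ Q) (hH : ∀ i, Disjoint Q (atoms (H i))) {J : Set σ} (hJ : Stable J F) :
    Stable (J ∪ (defStep H C q J).lfp) (and F (defFormula H C q)) := by
  have hJQ := hJ.disjoint hF
  have hDQ := lfp_defStep_subset H C q hq J
  have hIJ := Set.union_sdiff_of_disjoint_of_subset hJQ hDQ
  have hIF : Sat (J ∪ (defStep H C q J).lfp) F :=
    (sat_diff_of_disjoint hF).mp (by rw [hIJ]; exact sat_reduct_self.mp hJ.1)
  have hIG : Sat (J ∪ (defStep H C q J).lfp) (defFormula H C q) :=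
    sat_defFormula_of_inter_eq_lfp hH hC
      (by rw [hIJ, Set.union_inter_of_disjoint_of_subset hJQ hDQ])
  refine ⟨sat_reduct_self.mpr (sat_and.mpr ⟨hIF, hIG⟩), fun K hKI _ hK => ?_⟩
  rw [reduct_and, sat_and] at hK
  have hKJ : K \ Q = J := by
    refine hJ.2 _ (hIJ ▸ Set.sdiff_subset_sdiff_left hKI) (Set.subset_univ _) ?_
    rw [← hIJ, sat_reduct_diff_of_disjoint hF]
    exact hK.1
  have hDK := lfp_subset_of_sat_reduct_defFormula hH hIG hKI (hKJ.trans hIJ.symm) hK.2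
  rw [hIJ] at hDK
  exact subset_antisymm hKI (Set.union_subset (hKJ ▸ Set.sdiff_subset) hDK)

end Stable

end Formula

/-- Theorem on Infinitary Definitions: if no atom of `Q` occurs
in `F` and `G` is a definition for `Q`, then `I ↦ I \ Q` is a one-to-one
correspondence between the stable models of `F ∧ G` and those of `F`. -/
theorem theorem_on_infinitary_definitions {σ : Type} (F : Formula σ)
    (Q : Set σ) (hQ : ∀ q ∈ Q, q ∉ Formula.atoms F) (G : Formula σ)
    (hdef : Formula.IsDefinition Q G) :
    Set.BijOn (fun I => I \ Q)
      {I : Set σ | Formula.Stable I (Formula.and F G)}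
      {J : Set σ | Formula.Stable J F} := by
  obtain ⟨ι, H, C, q, rfl, hq, hC, hH⟩ := hdef.exists_eq_defFormula
  have hF : Disjoint Q (Formula.atoms F) := Set.disjoint_left.mpr hQ
  refine ⟨fun I hI => hI.diff_of_and_defFormula hF hq hC hH, fun I₁ h₁ I₂ h₂ h => ?_,
    fun J hJ => ⟨_, hJ.union_lfp_and_defFormula hF hq hC hH,
      Set.union_sdiff_of_disjoint_of_subset (hJ.disjoint hF)
        (Formula.lfp_defStep_subset H C q hq J)⟩⟩
  rw [h₁.eq_union_lfp_of_and_defFormula hF hq hC hH,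
    h₂.eq_union_lfp_of_and_defFormula hF hq hC hH]
  exact congrArg (fun J => J ∪ (Formula.defStep H C q J).lfp) h
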